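/- arXiv:2301.07643 — 3 statements merged into one kernel-verified Lean document; each statement's English description precedes it below -/
import Mathlib

section
/- Let G be a connected graph with n vertices, m edges, and cyclomatic number \mu = m - n + 1 > 0. Then the inequality (1/2)(\mu^2/(n-1) - \mu) < \cap(G) is strict. -/
open SimpleGraph Finset
open scoped Classical

/-- `T` is a spanning tree of `G`. -/
def IsSpanningTree {V : Type*} (G T : SimpleGraph V) : Prop :=
  T ≤ G ∧ T.Connected ∧ T.IsAcyclic

/-- Tree edge `e` lies on the fundamental cycle of `f` with respect to `T`:
deleting `e` from `T` disconnects the endpoints of `f`. -/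
def OnFundCycle {V : Type*} (T : SimpleGraph V) (e f : Sym2 V) : Prop :=
  ∃ v w : V, f = s(v, w) ∧ ¬ (T.deleteEdges {e}).Reachable v w

/-- The bond of a tree edge `e`: all edges of `G` joining the two components of `T - e`. -/
def Bond {V : Type*} (G T : SimpleGraph V) (e : Sym2 V) : Set (Sym2 V) :=
  {f | f ∈ G.edgeSet ∧ OnFundCycle T e f}

/-- The fundamental cycles of `f` and `f'` w.r.t. `T` share at least one tree edge. -/
def CyclesMeet {V : Type*} (T : SimpleGraph V) (f f' : Sym2 V) : Prop :=
  ∃ e ∈ T.edgeSet, OnFundCycle T e f ∧ OnFundCycle T e f'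

/-- `∩_G(T)`: the number of unordered pairs of distinct non-tree edges whose
fundamental cycles w.r.t. `T` share at least one tree edge. -/
noncomputable def interT {V : Type*} [Fintype V] (G T : SimpleGraph V) : ℕ :=
  (((G.edgeSet \ T.edgeSet).toFinset.offDiag).filter
    (fun p => CyclesMeet T p.1 p.2)).card / 2

/-- `∩(G)`: the intersection number, the minimum of `∩_G(T)` over spanning trees `T`. -/
noncomputable def interNum {V : Type*} [Fintype V] (G : SimpleGraph V) : ℕ :=
  sInf {k | ∃ T : SimpleGraph V, IsSpanningTree G T ∧ interT G T = k}

/-!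
Fix a spanning tree `T` attaining `∩(G)` and give each non-tree edge `f` the uniform
probability vector `w_f` on the tree edges of its fundamental cycle; there are at least two of
them, so `⟨w_f, w_g⟩ ≤ 1/2`, and `⟨w_f, w_g⟩ = 0` unless the two cycles meet. Cauchy–Schwarz over
the `n - 1` tree edges gives
`μ² = (∑_e ∑_f w_f(e))² ≤ (n - 1) ∑_{f,g} ⟨w_f, w_g⟩ ≤ (n - 1)(μ + 2∩(G))/2`,
hence `(1/2)(μ²/(n-1) - μ) ≤ ∩(G)/2 - μ/4 < ∩(G)`.
-/

section Counting
variable {ι κ : Type*}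

theorem two_dvd_card_filter_offDiag [DecidableEq ι] (s : Finset ι) {r : ι → ι → Prop}
    [DecidableRel r] (hr : ∀ a b, r a b → r b a) : 2 ∣ #{p ∈ s.offDiag | r p.1 p.2} := by
  rw [card_eq_sum_card_image (Sym2.mk.uncurry : ι × ι → _)]
  refine dvd_sum fun z hz => ?_
  obtain ⟨⟨a, b⟩, hab, rfl⟩ := mem_image.1 hz
  simp only [mem_filter, mem_offDiag] at hab
  have hne : (a, b) ≠ (b, a) := by simpa [eq_comm] using hab.1.2.2
  have hfiber : {x ∈ {p ∈ s.offDiag | r p.1 p.2} | Sym2.mk.uncurry x = Sym2.mk.uncurry (a, b)}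
      = {(a, b), (b, a)} := by
    ext x
    simp only [mem_filter, mem_insert, mem_singleton]
    obtain ⟨c, d⟩ := x
    simp only [mem_offDiag, Function.uncurry_apply_pair, Sym2.eq_iff, Prod.mk.injEq]
    constructor
    · exact fun h => h.2
    · rintro (⟨rfl, rfl⟩ | ⟨rfl, rfl⟩)
      · exact ⟨hab, by simp⟩
      · exact ⟨⟨⟨hab.1.2.1, hab.1.1, hab.1.2.2.symm⟩, hr _ _ hab.2⟩, by simp⟩
  rw [hfiber, card_pair hne]

theorem sq_card_le_card_mul_sum_sum_mul (F : Finset ι) (E : Finset κ) (w : ι → κ → ℝ)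
    (hw : ∀ f ∈ F, ∑ e ∈ E, w f e = 1) :
    (#F : ℝ) ^ 2 ≤ #E * ∑ f ∈ F, ∑ g ∈ F, ∑ e ∈ E, w f e * w g e :=
  calc (#F : ℝ) ^ 2 = (∑ e ∈ E, ∑ f ∈ F, w f e) ^ 2 := by
        rw [sum_comm, sum_congr rfl hw, sum_const, nsmul_one]
    _ ≤ #E * ∑ e ∈ E, (∑ f ∈ F, w f e) ^ 2 := sq_sum_le_card_mul_sum_sq
    _ = #E * ∑ f ∈ F, ∑ g ∈ F, ∑ e ∈ E, w f e * w g e := by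
        simp_rw [sq, sum_mul_sum]
        rw [sum_comm]
        exact congrArg _ (sum_congr rfl fun f _ => sum_comm)

theorem sum_sum_le_of_le_half [DecidableEq ι] (F : Finset ι) (c : ι → ι → ℝ)
    (r : ι → ι → Prop) [DecidableRel r]
    (hc : ∀ f ∈ F, ∀ g ∈ F, c f g ≤ 1 / 2) (hr : ∀ f g, ¬ r f g → c f g = 0) :
    ∑ f ∈ F, ∑ g ∈ F, c f g ≤ (#F + #{p ∈ F.offDiag | r p.1 p.2}) / 2 := by
  rw [← sum_product' F F c, ← diag_union_offDiag F, sum_union (disjoint_diag_offDiag F),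
    ← sum_filter_add_sum_filter_not F.offDiag (fun p => r p.1 p.2),
    sum_eq_zero (s := {p ∈ F.offDiag | ¬ r p.1 p.2}) fun p hp => hr _ _ (mem_filter.1 hp).2]
  have hdiag : ∑ p ∈ F.diag, c p.1 p.2 ≤ #F * (1 / 2) := by
    rw [← diag_card]
    refine (sum_le_card_nsmul _ _ _ fun p hp => ?_).trans_eq (nsmul_eq_mul _ _)
    obtain ⟨hp1, hp12⟩ := mem_diag.1 hp
    exact hc _ hp1 _ (hp12 ▸ hp1)
  have hoff : ∑ p ∈ F.offDiag with r p.1 p.2, c p.1 p.2 ≤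
      #{p ∈ F.offDiag | r p.1 p.2} * (1 / 2) := by
    refine (sum_le_card_nsmul _ _ _ fun p hp => ?_).trans_eq (nsmul_eq_mul _ _)
    obtain ⟨hp1, hp2, -⟩ := mem_offDiag.1 (mem_filter.1 hp).1
    exact hc _ hp1 _ hp2
  linarith

theorem sq_card_le_card_mul_card_add_card_filter_offDiag [DecidableEq ι] [DecidableEq κ]
    (F : Finset ι) (E : Finset κ) (S : ι → Finset κ) (hSE : ∀ f ∈ F, S f ⊆ E)
    (hS : ∀ f ∈ F, 2 ≤ #(S f)) :
    (#F : ℝ) ^ 2 ≤ #E * ((#F + #{p ∈ F.offDiag | ¬ Disjoint (S p.1) (S p.2)}) / 2) := by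
  set w : ι → κ → ℝ := fun f e => if e ∈ S f then (#(S f) : ℝ)⁻¹ else 0
  have hw_nonneg (f : ι) (e : κ) : 0 ≤ w f e := by positivity
  have hw_le (f : ι) (hf : f ∈ F) (e : κ) : w f e ≤ 1 / 2 := by
    have : (2 : ℝ) ≤ #(S f) := by exact_mod_cast hS f hf
    unfold w; split_ifs
    · rw [one_div]; exact inv_anti₀ two_pos this
    · norm_num
  have hw_sum (f : ι) (hf : f ∈ F) : ∑ e ∈ E, w f e = 1 := by
    have : (#(S f) : ℝ) ≠ 0 := by have := hS f hf; positivity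
    rw [sum_ite_mem, inter_eq_right.2 (hSE f hf), sum_const, nsmul_eq_mul, mul_inv_cancel₀ this]
  have hinner_le (f : ι) (hf : f ∈ F) (g : ι) (hg : g ∈ F) :
      ∑ e ∈ E, w f e * w g e ≤ 1 / 2 :=
    calc ∑ e ∈ E, w f e * w g e ≤ ∑ e ∈ E, 1 / 2 * w g e :=
          sum_le_sum fun e _ => mul_le_mul_of_nonneg_right (hw_le f hf e) (hw_nonneg g e)
      _ = 1 / 2 := by rw [← mul_sum, hw_sum g hg, mul_one]
  have hinner_eq_zero (f g : ι) (hfg : Disjoint (S f) (S g)) :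
      ∑ e ∈ E, w f e * w g e = 0 := by
    refine sum_eq_zero fun e _ => ?_
    by_cases he : e ∈ S f
    · simp [w, disjoint_left.1 hfg he]
    · simp [w, he]
  calc (#F : ℝ) ^ 2 ≤ #E * ∑ f ∈ F, ∑ g ∈ F, ∑ e ∈ E, w f e * w g e :=
        sq_card_le_card_mul_sum_sum_mul F E w hw_sum
    _ ≤ _ := mul_le_mul_of_nonneg_left (sum_sum_le_of_le_half F _ _ hinner_le
        fun f g h => hinner_eq_zero f g (not_not.1 h)) (by positivity)

end Counting

noncomputable def fundCycleEdges {V : Type*} [Fintype V] (T : SimpleGraph V) (f : Sym2 V) :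
    Finset (Sym2 V) :=
  {e ∈ T.edgeFinset | OnFundCycle T e f}

namespace SimpleGraph
variable {V : Type*} {G T : SimpleGraph V}

theorem IsAcyclic.not_reachable_deleteEdges_of_mem_edges (hT : T.IsAcyclic) {v w : V}
    {p : T.Walk v w} (hp : p.IsPath) {e : Sym2 V} (he : e ∈ p.edges) :
    ¬ (T.deleteEdges {e}).Reachable v w := by
  induction e using Sym2.ind with
  | _ a b =>
    rw [reachable_deleteEdges_iff_exists_walk]
    rintro ⟨q, hq⟩
    have hpath : q.toPath = ⟨p, hp⟩ := (hT.subsingleton_path v w).elim _ _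
    exact hq (q.edges_toPath_subset_edges (by rw [hpath]; exact he))

theorem IsTree.two_le_card_fundCycleEdges [Fintype V] (hT : T.IsTree) {f : Sym2 V}
    (hf : ¬ f.IsDiag) (hfT : f ∉ T.edgeSet) : 2 ≤ #(fundCycleEdges T f) := by
  induction f using Sym2.ind with
  | _ v w =>
    obtain ⟨p, hp⟩ := (hT.connected v w).some.toPath
    have hlen : 2 ≤ p.length := by
      have h0 : p.length ≠ 0 := fun h => hf (Walk.eq_of_length_eq_zero h)
      have h1 : p.length ≠ 1 := fun h => hfT (Walk.adj_of_length_eq_one h)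
      omega
    have hsub : p.edges.toFinset ⊆ fundCycleEdges T s(v, w) := fun e he => by
      rw [List.mem_toFinset] at he
      exact mem_filter.2 ⟨mem_edgeFinset.2 (p.edges_subset_edgeSet he),
        v, w, rfl, hT.isAcyclic.not_reachable_deleteEdges_of_mem_edges hp he⟩
    calc 2 ≤ p.length := hlen
      _ = #p.edges.toFinset := by rw [List.toFinset_card_of_nodup hp.edges_nodup, p.length_edges]
      _ ≤ _ := card_le_card hsub

theorem Connected.exists_interT_eq_interNum [Fintype V] (hG : G.Connected) :
    ∃ T, IsSpanningTree G T ∧ interT G T = interNum G := by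
  obtain ⟨T, hTG, hT⟩ := hG.exists_isTree_le
  exact Nat.sInf_mem (s := {k | ∃ T, IsSpanningTree G T ∧ interT G T = k})
    ⟨_, T, ⟨hTG, hT.1, hT.2⟩, rfl⟩

end SimpleGraph

section SpanningTree
variable {V : Type*} {G T : SimpleGraph V}

theorem cyclesMeet_iff_not_disjoint [Fintype V] {f g : Sym2 V} :
    CyclesMeet T f g ↔ ¬ Disjoint (fundCycleEdges T f) (fundCycleEdges T g) := by
  simp only [CyclesMeet, fundCycleEdges, not_disjoint_iff, mem_filter, mem_edgeFinset]
  aesop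

theorem two_mul_interT [Fintype V] : 2 * interT G T =
    #{p ∈ (G.edgeSet \ T.edgeSet).toFinset.offDiag | CyclesMeet T p.1 p.2} :=
  Nat.mul_div_cancel' <| two_dvd_card_filter_offDiag (r := CyclesMeet T) _
    fun _ _ ⟨e, he, hf, hg⟩ => ⟨e, he, hg, hf⟩

theorem IsSpanningTree.isTree (hT : IsSpanningTree G T) : T.IsTree := ⟨hT.2.1, hT.2.2⟩

theorem IsSpanningTree.card_edgeSet_sdiff_add [Fintype V] (hT : IsSpanningTree G T) :
    #(G.edgeSet \ T.edgeSet).toFinset + Fintype.card V = #G.edgeSet.toFinset + 1 := by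
  have hsub : T.edgeSet.toFinset ⊆ G.edgeSet.toFinset :=
    Set.toFinset_subset_toFinset.2 (edgeSet_mono hT.1)
  have hcard : #T.edgeSet.toFinset + 1 = Fintype.card V := hT.isTree.card_edgeFinset
  rw [Set.toFinset_sdiff, card_sdiff_of_subset hsub, ← hcard]
  have := card_le_card hsub
  omega

theorem IsSpanningTree.sq_card_edgeSet_sdiff_le [Fintype V] (hT : IsSpanningTree G T) :
    (#(G.edgeSet \ T.edgeSet).toFinset : ℝ) ^ 2 ≤
      (Fintype.card V - 1) * ((#(G.edgeSet \ T.edgeSet).toFinset + 2 * interT G T) / 2) := by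
  have hE : (#T.edgeFinset : ℝ) = Fintype.card V - 1 := by
    rw [← hT.isTree.card_edgeFinset]; push_cast; ring
  have hmeet : {p ∈ (G.edgeSet \ T.edgeSet).toFinset.offDiag |
      ¬ Disjoint (fundCycleEdges T p.1) (fundCycleEdges T p.2)} =
      {p ∈ (G.edgeSet \ T.edgeSet).toFinset.offDiag | CyclesMeet T p.1 p.2} :=
    filter_congr fun _ _ => cyclesMeet_iff_not_disjoint.symm
  have h := sq_card_le_card_mul_card_add_card_filter_offDiag (G.edgeSet \ T.edgeSet).toFinset
    T.edgeFinset (fundCycleEdges T) (fun _ _ => filter_subset _ _) fun f hf => by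
      obtain ⟨hfG, hfT⟩ := Set.mem_toFinset.1 hf
      exact hT.isTree.two_le_card_fundCycleEdges (G.not_isDiag_of_mem_edgeSet hfG) hfT
  rwa [hmeet, ← two_mul_interT, hE, Nat.cast_mul, Nat.cast_two] at h

end SpanningTree

theorem half_sub_lt_of_sq_le {μ t I : ℝ} (hμ : 0 < μ) (hI : 0 ≤ I)
    (h : μ ^ 2 ≤ t * ((μ + 2 * I) / 2)) : 1 / 2 * (μ ^ 2 / t - μ) < I := by
  have ht : 0 < t := by
    by_contra! ht
    nlinarith [mul_nonpos_of_nonpos_of_nonneg ht (by positivity : 0 ≤ (μ + 2 * I) / 2)]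
  have : μ ^ 2 / t ≤ (μ + 2 * I) / 2 := by rw [div_le_iff₀ ht]; linarith
  linarith

theorem lower_bound_strict_general {V : Type*} [Fintype V]
    (G : SimpleGraph V) (hG : G.Connected)
    (hμ : 0 < G.edgeSet.toFinset.card + 1 - Fintype.card V) :
    (1 / 2 : ℝ) * (((G.edgeSet.toFinset.card + 1 - Fintype.card V : ℕ) : ℝ) ^ 2
          / ((Fintype.card V : ℝ) - 1)
        - ((G.edgeSet.toFinset.card + 1 - Fintype.card V : ℕ) : ℝ)) < interNum G := by
  obtain ⟨T, hT, hTmin⟩ := hG.exists_interT_eq_interNum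
  have hμT : G.edgeSet.toFinset.card + 1 - Fintype.card V =
      #(G.edgeSet \ T.edgeSet).toFinset := by
    have := hT.card_edgeSet_sdiff_add; omega
  rw [hμT] at hμ ⊢
  rw [← hTmin]
  exact half_sub_lt_of_sq_le (by exact_mod_cast hμ) (Nat.cast_nonneg _)
    hT.sq_card_edgeSet_sdiff_le

/-- Strict lower bound: if `μ = m - n + 1 > 0` then
`(1/2)(μ²/(n-1) - μ) < ∩(G)`. -/
theorem lower_bound_strict {V : Type*} [Fintype V] [DecidableEq V]
    (G : SimpleGraph V) (hG : G.Connected)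
    (hμ : 0 < G.edgeSet.toFinset.card + 1 - Fintype.card V) :
    (1 / 2 : ℝ) * (((G.edgeSet.toFinset.card + 1 - Fintype.card V : ℕ) : ℝ) ^ 2
          / ((Fintype.card V : ℝ) - 1)
        - ((G.edgeSet.toFinset.card + 1 - Fintype.card V : ℕ) : ℝ)) < interNum G :=
  lower_bound_strict_general G hG hμ
end

section
/- Let G be a graph with a universal vertex u and star spanning tree T_s centered at u. Then \cap_G(T_s) = \sum_{v in V \ {u}} binomial(d(v) - 1, 2), where d(v) is the degree of v in G. -/
/-! Deleting the tree edge `ux` from the star isolates `x` and keeps every other vertex joined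
to `u`, so the fundamental cycle of a non-tree edge `vw` (where `v, w ≠ u`) consists of the tree
edges `uv` and `uw`. Hence two non-tree edges meet exactly when they share an endpoint `x ≠ u`,
and that endpoint is unique. The non-tree edges at `x` are its `d(x) - 1` edges other than `ux`,
which form `2 * binom(d(x) - 1, 2)` ordered pairs. -/

open SimpleGraph Finset
open scoped Classical

namespace Finset

variable {α : Type*} [DecidableEq α]

lemma card_offDiag_eq_two_mul_choose_two (s : Finset α) : #s.offDiag = 2 * (#s).choose 2 := by
  rw [← Sym2.card_image_offDiag, Sym2.two_mul_card_image_offDiag]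

lemma card_offDiag_filter_exists_mem_mem (S : Finset (Sym2 α)) (A : Finset α) :
    #{p ∈ S.offDiag | ∃ x ∈ A, x ∈ p.1 ∧ x ∈ p.2} =
      2 * ∑ x ∈ A, (#{e ∈ S | x ∈ e}).choose 2 := by
  have hsplit : {p ∈ S.offDiag | ∃ x ∈ A, x ∈ p.1 ∧ x ∈ p.2} =
      A.biUnion fun x => {e ∈ S | x ∈ e}.offDiag := by
    ext p
    simp only [mem_filter, mem_offDiag, mem_biUnion]
    grind
  have hdisj : (A : Set α).PairwiseDisjoint fun x => {e ∈ S | x ∈ e}.offDiag := by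
    intro x _ y _ hxy
    refine disjoint_left.2 fun p hx hy => ?_
    simp only [mem_offDiag, mem_filter] at hx hy
    exact hx.2.2 (((Sym2.mem_and_mem_iff hxy).1 ⟨hx.1.2, hy.1.2⟩).trans
      ((Sym2.mem_and_mem_iff hxy).1 ⟨hx.2.1.2, hy.2.1.2⟩).symm)
  simp only [hsplit, card_biUnion hdisj, card_offDiag_eq_two_mul_choose_two, mul_sum]

end Finset

namespace SimpleGraph

variable {V : Type*} {u : V}

lemma mem_edgeSet_starGraph {e : Sym2 V} :
    e ∈ (starGraph u).edgeSet ↔ ∃ x ≠ u, e = s(u, x) := by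
  induction e using Sym2.ind with
  | _ a b =>
    rw [mem_edgeSet, starGraph_adj]
    constructor
    · rintro ⟨hab, rfl | rfl⟩
      · exact ⟨b, hab.symm, rfl⟩
      · exact ⟨a, hab, Sym2.eq_swap⟩
    · rintro ⟨x, hx, he⟩
      rcases Sym2.eq_iff.1 he with ⟨rfl, rfl⟩ | ⟨rfl, rfl⟩
      · exact ⟨hx.symm, .inl rfl⟩
      · exact ⟨hx, .inr rfl⟩

lemma mem_edgeSet_sdiff_starGraph {G : SimpleGraph V} {e : Sym2 V} :
    e ∈ G.edgeSet \ (starGraph u).edgeSet ↔ e ∈ G.edgeSet ∧ u ∉ e := by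
  induction e using Sym2.ind with
  | _ a b =>
    simp only [Set.mem_sdiff, mem_edgeSet, starGraph_adj, Sym2.mem_iff, not_and, not_or]
    grind [Adj.ne]

lemma reachable_deleteEdges_starGraph_iff {x a b : V} (hx : x ≠ u) :
    ((starGraph u).deleteEdges {s(u, x)}).Reachable a b ↔ a = b ∨ (a ≠ x ∧ b ≠ x) := by
  set H := (starGraph u).deleteEdges {s(u, x)}
  have hH : ∀ {a b}, H.Adj a b ↔ a ≠ b ∧ (a = u ∨ b = u) ∧ a ≠ x ∧ b ≠ x := by
    intro a b
    simp only [H, deleteEdges_adj, starGraph_adj, Set.mem_singleton_iff, Sym2.eq_iff]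
    grind
  have isolated : ∀ {b}, H.Reachable x b → x = b := by
    rintro b ⟨_ | ⟨h, _⟩⟩
    · rfl
    · exact absurd rfl (hH.1 h).2.2.1
  have to_center : ∀ {a}, a ≠ x → H.Reachable a u := fun {a} ha =>
    (eq_or_ne a u).elim (fun h => h ▸ .refl _)
      (fun h => (hH.2 ⟨h, .inr rfl, ha, hx.symm⟩).reachable)
  constructor
  · intro h
    by_contra! hc
    obtain ⟨hab, hc⟩ := hc
    by_cases ha : a = x
    · exact hab (ha ▸ isolated (ha ▸ h))
    · exact hab (hc ha ▸ (isolated (hc ha ▸ h.symm)).symm)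
  · rintro (rfl | ⟨ha, hb⟩)
    · rfl
    · exact (to_center ha).trans (to_center hb).symm

lemma onFundCycle_mk_iff {T : SimpleGraph V} {e : Sym2 V} {v w : V} :
    OnFundCycle T e s(v, w) ↔ ¬ (T.deleteEdges {e}).Reachable v w := by
  refine ⟨?_, fun h => ⟨v, w, rfl, h⟩⟩
  rintro ⟨a, b, hab, hr⟩
  rcases Sym2.eq_iff.1 hab with ⟨rfl, rfl⟩ | ⟨rfl, rfl⟩
  exacts [hr, fun h => hr h.symm]

lemma onFundCycle_starGraph_iff {x : V} (hx : x ≠ u) {f : Sym2 V} :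
    OnFundCycle (starGraph u) s(u, x) f ↔ ¬ f.IsDiag ∧ x ∈ f := by
  induction f using Sym2.ind with
  | _ v w =>
    rw [onFundCycle_mk_iff, reachable_deleteEdges_starGraph_iff hx, Sym2.mk_isDiag_iff,
      Sym2.mem_iff]
    grind

lemma cyclesMeet_starGraph_iff {f f' : Sym2 V} :
    CyclesMeet (starGraph u) f f' ↔
      ¬ f.IsDiag ∧ ¬ f'.IsDiag ∧ ∃ x ≠ u, x ∈ f ∧ x ∈ f' := by
  simp only [CyclesMeet, mem_edgeSet_starGraph]
  constructor
  · rintro ⟨_, ⟨x, hx, rfl⟩, hf, hf'⟩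
    rw [onFundCycle_starGraph_iff hx] at hf hf'
    exact ⟨hf.1, hf'.1, x, hx, hf.2, hf'.2⟩
  · rintro ⟨hf, hf', x, hx, hxf, hxf'⟩
    exact ⟨_, ⟨x, hx, rfl⟩, (onFundCycle_starGraph_iff hx).2 ⟨hf, hxf⟩,
      (onFundCycle_starGraph_iff hx).2 ⟨hf', hxf'⟩⟩

variable [Fintype V] [DecidableEq V] {G : SimpleGraph V}

lemma card_filter_mem_filter_notMem_edgeFinset {x : V} (h : G.Adj x u) :
    #{e ∈ {e ∈ G.edgeFinset | u ∉ e} | x ∈ e} = G.degree x - 1 := by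
  have hedges : {e ∈ {e ∈ G.edgeFinset | u ∉ e} | x ∈ e} =
      (G.incidenceFinset x).erase s(x, u) := by
    ext e
    induction e using Sym2.ind with
    | _ a b =>
      simp only [mem_filter, mem_erase, mem_edgeFinset, mem_edgeSet, mem_incidenceFinset,
        mk'_mem_incidenceSet_iff, Sym2.mem_iff]
      grind [Adj.ne]
  rw [hedges, card_erase_of_mem (by simpa [mem_incidenceSet] using h),
    card_incidenceFinset_eq_degree]

end SimpleGraph

theorem star_formula_general {V : Type*} [Fintype V] [DecidableEq V]
    (G : SimpleGraph V) (u : V)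
    (hu : ∀ w, w ≠ u → G.Adj u w) :
    interT G (SimpleGraph.fromRel (fun x _ => x = u)) =
      ∑ v ∈ Finset.univ.erase u, (G.degree v - 1).choose 2 := by
  set S := {e ∈ G.edgeFinset | u ∉ e}
  have hmeet : ∀ p ∈ S.offDiag,
      CyclesMeet (starGraph u) p.1 p.2 ↔ ∃ x ∈ univ.erase u, x ∈ p.1 ∧ x ∈ p.2 := by
    intro p hp
    simp only [mem_offDiag, S, mem_filter, mem_edgeFinset] at hp
    simp [cyclesMeet_starGraph_iff, G.not_isDiag_of_mem_edgeSet hp.1.1,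
      G.not_isDiag_of_mem_edgeSet hp.2.1.1]
  have hdeg : ∀ x ∈ univ.erase u, (#{e ∈ S | x ∈ e}).choose 2 = (G.degree x - 1).choose 2 :=
    fun x hx => by rw [card_filter_mem_filter_notMem_edgeFinset (hu x (ne_of_mem_erase hx)).symm]
  change interT G (starGraph u) = _
  rw [interT]
  -- `interT` was elaborated with classical decidability instances
  convert_to #{p ∈ S.offDiag | CyclesMeet (starGraph u) p.1 p.2} / 2 = _
  · congr!
    ext e
    simp only [Set.mem_toFinset, mem_edgeSet_sdiff_starGraph, S, mem_filter, mem_edgeFinset]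
  rw [filter_congr hmeet, card_offDiag_filter_exists_mem_mem, sum_congr rfl hdeg,
    Nat.mul_div_cancel_left _ two_pos]

/-- For a graph with universal vertex `u` and star spanning tree `T_s` centered
at `u`, `∩_G(T_s) = ∑_{v ≠ u} binom(d(v) - 1, 2)`. -/
theorem star_formula {V : Type*} [Fintype V] [DecidableEq V]
    (G : SimpleGraph V) (hG : G.Connected) (u : V)
    (hu : ∀ w, w ≠ u → G.Adj u w) :
    interT G (SimpleGraph.fromRel (fun x _ => x = u)) =
      ∑ v ∈ Finset.univ.erase u, (G.degree v - 1).choose 2 :=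
  star_formula_general G u hu
end

section
/- Let G be a connected graph on n vertices containing a universal vertex, with n <= N. Then \cap(G) <= \cap(K_N), where K_N is the complete graph on N vertices. -/
open SimpleGraph Finset
open scoped Classical

set_option maxHeartbeats 1600000

section Basics

variable {V : Type*}

lemma onFund_mk {T : SimpleGraph V} {e : Sym2 V} {v w : V} :
    OnFundCycle T e s(v, w) ↔ ¬ (T.deleteEdges {e}).Reachable v w := by
  constructor
  · rintro ⟨v', w', heq, hn⟩
    rcases Sym2.eq_iff.mp heq with ⟨rfl, rfl⟩ | ⟨rfl, rfl⟩
    · exact hn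
    · exact fun h => hn h.symm
  · intro hn
    exact ⟨v, w, rfl, hn⟩

lemma no_reach_of_isolated {G : SimpleGraph V} {v w : V}
    (h : ∀ z, ¬ G.Adj v z) (hne : v ≠ w) : ¬ G.Reachable v w := by
  rintro ⟨p⟩
  cases p with
  | nil => exact hne rfl
  | cons ha _ => exact h _ ha

/-- The star graph centered at `u`. -/
def starG (u : V) : SimpleGraph V where
  Adj a b := a ≠ b ∧ (a = u ∨ b = u)
  symm := ⟨by rintro a b ⟨h1, h2⟩; exact ⟨h1.symm, h2.symm⟩⟩
  loopless := ⟨by rintro a ⟨h1, _⟩; exact h1 rfl⟩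

lemma starG_adj {u a b : V} : (starG u).Adj a b ↔ a ≠ b ∧ (a = u ∨ b = u) := Iff.rfl

lemma starG_reach_u {u v : V} : (starG u).Reachable v u := by
  by_cases h : v = u
  · exact h ▸ Reachable.refl v
  · exact (Adj.reachable ⟨h, Or.inr rfl⟩)

lemma starG_connected (u : V) [Nonempty V] : (starG u).Connected := by
  refine ⟨fun v w => ?_⟩
  exact starG_reach_u.trans starG_reach_u.symm

lemma starG_acyclic (u : V) : (starG u).IsAcyclic := by
  rw [isAcyclic_iff_forall_adj_isBridge]
  rintro v w ⟨hne, hor⟩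
  rw [isBridge_iff]
  rcases hor with rfl | rfl
  · -- v = u, w ≠ u
    intro hr
    refine no_reach_of_isolated (G := (starG v).deleteEdges {s(v, w)}) (v := w)
      (fun z hz => ?_) (fun h => hne h.symm) hr.symm
    rw [SimpleGraph.deleteEdges_adj] at hz
    obtain ⟨⟨hz1, hz2⟩, hz3⟩ := hz
    rcases hz2 with rfl | rfl
    · exact hne rfl
    · exact hz3 (by rw [Sym2.eq_swap]; exact rfl)
  · -- w = u, v ≠ u
    intro hr
    refine no_reach_of_isolated (G := (starG w).deleteEdges {s(v, w)}) (v := v)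
      (fun z hz => ?_) hne hr
    rw [SimpleGraph.deleteEdges_adj] at hz
    obtain ⟨⟨hz1, hz2⟩, hz3⟩ := hz
    rcases hz2 with rfl | rfl
    · exact hne rfl
    · exact hz3 rfl

lemma starG_isTree (u : V) [Nonempty V] : (starG u).IsTree :=
  ⟨starG_connected u, starG_acyclic u⟩

lemma starG_spanning {G : SimpleGraph V} {u : V} (hG : Nonempty V)
    (hu : ∀ w, w ≠ u → G.Adj u w) : IsSpanningTree G (starG u) := by
  refine ⟨?_, starG_connected u, starG_acyclic u⟩
  rintro a b ⟨hne, hor⟩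
  rcases hor with rfl | rfl
  · exact hu b (fun h => hne h.symm)
  · exact (hu a hne).symm

lemma u_not_mem_nontree {G : SimpleGraph V} {u : V} {f : Sym2 V}
    (hf : f ∈ G.edgeSet \ (starG u).edgeSet) : u ∉ f := by
  induction f using Sym2.ind with
  | _ a b =>
    obtain ⟨hG, hst⟩ := hf
    rw [SimpleGraph.mem_edgeSet] at hG
    intro hmem
    rcases Sym2.mem_iff.mp hmem with rfl | rfl
    · exact hst ((SimpleGraph.mem_edgeSet _).mpr ⟨hG.ne, Or.inl rfl⟩)
    · exact hst ((SimpleGraph.mem_edgeSet _).mpr ⟨hG.ne, Or.inr rfl⟩)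

lemma starG_edge_char {u : V} {e : Sym2 V} (he : e ∈ (starG u).edgeSet) :
    ∃ z, z ≠ u ∧ e = s(u, z) := by
  induction e using Sym2.ind with
  | _ a b =>
    obtain ⟨hne, hor⟩ := (SimpleGraph.mem_edgeSet _).mp he
    rcases hor with rfl | rfl
    · exact ⟨b, fun hb => hne hb.symm, rfl⟩
    · exact ⟨a, hne, Sym2.eq_swap⟩

lemma star_onFund_mem {G : SimpleGraph V} {u : V} {e f : Sym2 V}
    (he : e ∈ (starG u).edgeSet) (hf : f ∈ G.edgeSet \ (starG u).edgeSet)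
    (h : OnFundCycle (starG u) e f) : ∃ z, z ≠ u ∧ e = s(u, z) ∧ z ∈ f := by
  obtain ⟨z, hz, rfl⟩ := starG_edge_char he
  refine ⟨z, hz, rfl, ?_⟩
  obtain ⟨v, w, rfl, hn⟩ := h
  have hreach : ∀ t : V, t ≠ z → ((starG u).deleteEdges {s(u, z)}).Reachable t u := by
    intro t ht
    by_cases htu : t = u
    · subst htu; exact Reachable.refl t
    · refine Adj.reachable ?_
      rw [SimpleGraph.deleteEdges_adj]
      refine ⟨⟨htu, Or.inr rfl⟩, ?_⟩
      simp only [Set.mem_singleton_iff, Sym2.eq_iff]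
      rintro (⟨rfl, rfl⟩ | ⟨rfl, -⟩)
      · exact htu rfl
      · exact ht rfl
  by_contra hzf
  rw [Sym2.mem_iff] at hzf
  push_neg at hzf
  exact hn ((hreach v (Ne.symm hzf.1)).trans (hreach w (Ne.symm hzf.2)).symm)

end Basics

section StarCount

variable {V : Type*} [Fintype V] [DecidableEq V]

lemma star_upper (G : SimpleGraph V) (u : V) :
    ((((G.edgeSet \ (starG u).edgeSet).toFinset.offDiag).filter
      (fun p => CyclesMeet (starG u) p.1 p.2)).card)
      ≤ (Fintype.card V - 1) *
        ((Fintype.card V - 2) * (Fintype.card V - 2) - (Fintype.card V - 2)) := by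
  classical
  set n := Fintype.card V with hn
  set F : Finset (Sym2 V) := (G.edgeSet \ (starG u).edgeSet).toFinset with hF
  set Pairs := (F.offDiag.filter (fun p => CyclesMeet (starG u) p.1 p.2)) with hPairs
  -- every pair in Pairs has a common vertex distinct from u
  have key : ∀ p ∈ Pairs, ∃ z, z ≠ u ∧ z ∈ p.1 ∧ z ∈ p.2 := by
    rintro ⟨f, f'⟩ hp
    rw [hPairs, Finset.mem_filter] at hp
    obtain ⟨hoff, e, he, h1, h2⟩ := hp
    rw [Finset.mem_offDiag] at hoff
    have hf : f ∈ G.edgeSet \ (starG u).edgeSet := Set.mem_toFinset.mp hoff.1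
    have hf' : f' ∈ G.edgeSet \ (starG u).edgeSet := Set.mem_toFinset.mp hoff.2.1
    obtain ⟨z, hz, hez, hzf⟩ := star_onFund_mem he hf h1
    obtain ⟨z', hz', hez', hzf'⟩ := star_onFund_mem he hf' h2
    have : z = z' := by
      rw [hez'] at hez
      rcases Sym2.eq_iff.mp hez with ⟨-, h⟩ | ⟨h1', h2'⟩
      · exact h.symm
      · exact absurd h2' hz'
    exact ⟨z, hz, hzf, this ▸ hzf'⟩
  set keyFun : Sym2 V × Sym2 V → V :=
    fun p => if h : ∃ z, z ≠ u ∧ z ∈ p.1 ∧ z ∈ p.2 then h.choose else u with hkeyFun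
  have hmaps : ∀ p ∈ Pairs, keyFun p ∈ Finset.univ.erase u := by
    intro p hp
    have hkp : keyFun p = (key p hp).choose := by
      simp only [hkeyFun]
      rw [dif_pos (key p hp)]
    rw [hkp]
    exact Finset.mem_erase.mpr ⟨(key p hp).choose_spec.1, Finset.mem_univ _⟩
  rw [Finset.card_eq_sum_card_fiberwise hmaps]
  have hbound : ∀ x ∈ Finset.univ.erase u,
      (Pairs.filter (fun p => keyFun p = x)).card ≤ (n-2) * (n-2) - (n-2) := by
    intro x hx
    have hxu : x ≠ u := (Finset.mem_erase.mp hx).1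
    set Ex : Finset (Sym2 V) :=
      ((Finset.univ.erase u).erase x).image (fun z => s(x, z)) with hEx
    have hsub : (Pairs.filter (fun p => keyFun p = x)) ⊆ Ex.offDiag := by
      rintro ⟨f, f'⟩ hp
      rw [Finset.mem_filter] at hp
      obtain ⟨hpP, hkey⟩ := hp
      have hk := key _ hpP
      simp only [hkeyFun] at hkey
      rw [dif_pos hk] at hkey
      obtain ⟨hzu, hzf, hzf'⟩ := hk.choose_spec
      rw [hkey] at hzf hzf'
      rw [hPairs, Finset.mem_filter, Finset.mem_offDiag] at hpP
      obtain ⟨⟨hfF, hf'F, hne⟩, -⟩ := hpP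
      have hfm : f ∈ G.edgeSet \ (starG u).edgeSet := Set.mem_toFinset.mp hfF
      have hf'm : f' ∈ G.edgeSet \ (starG u).edgeSet := Set.mem_toFinset.mp hf'F
      have hmem : ∀ g : Sym2 V, g ∈ G.edgeSet \ (starG u).edgeSet → x ∈ g → g ∈ Ex := by
        intro g hg hxg
        obtain ⟨b, rfl⟩ := Sym2.mem_iff_exists.mp hxg
        have hadj : G.Adj x b := (SimpleGraph.mem_edgeSet _).mp hg.1
        have hbu : b ≠ u := by
          intro h
          exact u_not_mem_nontree hg (h ▸ Sym2.mem_mk_right x b)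
        rw [hEx, Finset.mem_image]
        exact ⟨b, Finset.mem_erase.mpr ⟨hadj.ne', Finset.mem_erase.mpr ⟨hbu, Finset.mem_univ _⟩⟩, rfl⟩
      exact Finset.mem_offDiag.mpr ⟨hmem f hfm hzf, hmem f' hf'm hzf', hne⟩
    calc (Pairs.filter (fun p => keyFun p = x)).card ≤ Ex.offDiag.card :=
            Finset.card_le_card hsub
      _ ≤ (n-2) * (n-2) - (n-2) := by
          rw [Finset.offDiag_card]
          have hinj : Set.InjOn (fun z => s(x, z)) ((Finset.univ.erase u).erase x) := by
            intro a ha b hb hab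
            rcases Sym2.eq_iff.mp hab with ⟨-, h⟩ | ⟨h1, h2⟩
            · exact h
            · exact absurd h1.symm (Finset.mem_erase.mp hb).1
          have hcard : Ex.card = n - 2 := by
            rw [hEx, Finset.card_image_of_injOn hinj, Finset.card_erase_of_mem
              (Finset.mem_erase.mpr ⟨hxu, Finset.mem_univ _⟩), Finset.card_erase_of_mem
              (Finset.mem_univ _), Finset.card_univ]
            omega
          rw [hcard]
    -- done
  calc ∑ x ∈ Finset.univ.erase u, (Pairs.filter (fun p => keyFun p = x)).card
      ≤ ∑ _x ∈ Finset.univ.erase u, ((n-2) * (n-2) - (n-2)) := Finset.sum_le_sum hbound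
    _ = (n - 1) * ((n-2) * (n-2) - (n-2)) := by
        rw [Finset.sum_const, Finset.card_erase_of_mem (Finset.mem_univ _), Finset.card_univ,
          smul_eq_mul]

end StarCount

section TreePath

variable {W : Type*} {T : SimpleGraph W}

/-- The unique path between two vertices in a tree. -/
noncomputable def theP (hT : T.IsTree) (v w : W) : T.Walk v w :=
  (hT.existsUnique_path v w).choose

lemma theP_isPath (hT : T.IsTree) (v w : W) : (theP hT v w).IsPath :=
  (hT.existsUnique_path v w).choose_spec.1

lemma theP_unique (hT : T.IsTree) {v w : W} {q : T.Walk v w} (hq : q.IsPath) :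
    q = theP hT v w :=
  (hT.existsUnique_path v w).choose_spec.2 q hq

lemma reach_del_iff (hT : T.IsTree) {e : Sym2 W} (v w : W) :
    (T.deleteEdges {e}).Reachable v w ↔ e ∉ (theP hT v w).edges := by
  constructor
  · rintro ⟨q⟩ hmem
    have hsub : ∀ e' ∈ q.edges, e' ∈ T.edgeSet := by
      intro e' he'
      have := q.edges_subset_edgeSet he'
      rw [SimpleGraph.edgeSet_deleteEdges] at this
      exact this.1
    have hnotin : ∀ e' ∈ q.edges, e' ≠ e := by
      intro e' he' h
      have := q.edges_subset_edgeSet he'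
      rw [SimpleGraph.edgeSet_deleteEdges] at this
      exact this.2 (h ▸ rfl)
    set q' := q.transfer T hsub with hq'
    have hedges : q'.edges = q.edges := q.edges_transfer hsub
    have hTP : (q'.toPath : T.Walk v w) = theP hT v w := theP_unique hT (q'.toPath.2)
    have : e ∈ (q'.toPath : T.Walk v w).edges := hTP ▸ hmem
    have : e ∈ q'.edges := q'.edges_toPath_subset this
    rw [hedges] at this
    exact hnotin e this rfl
  · intro hmem
    exact ⟨(theP hT v w).toDeleteEdges {e} (by
      intro e' he' h
      rw [Set.mem_singleton_iff] at h
      exact hmem (h ▸ he'))⟩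

lemma theP_edges_symm (hT : T.IsTree) {e : Sym2 W} {v w : W} :
    e ∈ (theP hT v w).edges ↔ e ∈ (theP hT w v).edges := by
  have h1 : (theP hT v w).reverse = theP hT w v :=
    theP_unique hT ((theP_isPath hT v w).reverse)
  rw [← h1, SimpleGraph.Walk.edges_reverse, List.mem_reverse]

lemma exists_last_dart {v w : W} (q : T.Walk v w) (hq : ¬ q.Nil) :
    ∃ y₁, T.Adj y₁ w ∧ s(y₁, w) ∈ q.edges := by
  induction q with
  | nil => exact absurd SimpleGraph.Walk.Nil.nil hq
  | @cons a b c h p ih =>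
    cases p with
    | nil => exact ⟨a, h, by simp⟩
    | @cons b' d c' h' p' =>
      obtain ⟨y₁, hy, hm⟩ := ih SimpleGraph.Walk.not_nil_cons
      exact ⟨y₁, hy, by rw [SimpleGraph.Walk.edges_cons]; exact List.mem_cons_of_mem _ hm⟩

/-- Splitting the unique path between the endpoints of a non-tree pair. -/
lemma path_split (hT : T.IsTree) {x y : W} (hxy : x ≠ y) (hf : s(x, y) ∉ T.edgeSet) :
    ∃ x₁ y₁, T.Adj x x₁ ∧ T.Adj y₁ y ∧
      s(x, x₁) ∈ (theP hT x y).edges ∧ s(y₁, y) ∈ (theP hT x y).edges ∧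
      s(y₁, y) ∈ (theP hT x₁ y).edges := by
  have hp : (theP hT x y).IsPath := theP_isPath hT x y
  set p := theP hT x y with hPdef
  clear_value p
  rw [eq_comm] at hPdef
  cases p with
  | nil => exact absurd rfl hxy
  | @cons _ b _ h q =>
    have hq : q.IsPath := hp.of_cons
    have hqnil : ¬ q.Nil := by
      intro hnil
      have hby : b = y := hnil.eq
      subst hby
      exact hf ((SimpleGraph.mem_edgeSet _).mpr h)
    obtain ⟨y₁, hy₁, hm⟩ := exists_last_dart q hqnil
    refine ⟨b, y₁, h, hy₁, ?_, ?_, ?_⟩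
    · rw [SimpleGraph.Walk.edges_cons]; exact List.mem_cons_self
    · rw [SimpleGraph.Walk.edges_cons]; exact List.mem_cons_of_mem _ hm
    · rw [← theP_unique hT hq]; exact hm

end TreePath

section Cut

variable {W : Type*} [Fintype W] [DecidableEq W] {T : SimpleGraph W}

noncomputable def cutA (T : SimpleGraph W) (c d : W) : Finset W :=
  Finset.univ.filter (fun z => (T.deleteEdges {s(c, d)}).Reachable c z)

lemma mem_cutA {c d z : W} : z ∈ cutA T c d ↔ (T.deleteEdges {s(c, d)}).Reachable c z := by
  simp [cutA]

lemma c_mem_cutA {c d : W} : c ∈ cutA T c d := mem_cutA.mpr (Reachable.refl c)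

lemma d_not_mem_cutA (hT : T.IsTree) {c d : W} (hcd : T.Adj c d) : d ∉ cutA T c d := by
  rw [mem_cutA]
  exact (isBridge_iff.mp (isAcyclic_iff_forall_adj_isBridge.mp hT.2 hcd))

lemma reach_c_or_d (hT : T.IsTree) {c d : W} (hcd : T.Adj c d) (z : W) :
    (T.deleteEdges {s(c, d)}).Reachable c z ∨ (T.deleteEdges {s(c, d)}).Reachable d z := by
  by_cases hm : s(c, d) ∈ (theP hT z c).edges
  · right
    have hd : d ∈ (theP hT z c).support :=
      SimpleGraph.Walk.snd_mem_support_of_mem_edges _ hm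
    have hq : (theP hT z c).IsPath := theP_isPath hT z c
    have he1 : s(c, d) ∉ ((theP hT z c).takeUntil d hd).edges := by
      intro hce
      have hc : c ∈ ((theP hT z c).takeUntil d hd).support :=
        SimpleGraph.Walk.fst_mem_support_of_mem_edges _ hce
      have hnodup := hq.support_nodup
      rw [← (theP hT z c).take_spec hd, SimpleGraph.Walk.support_append] at hnodup
      have hdisj := List.disjoint_of_nodup_append hnodup
      have hc2 : c ∈ ((theP hT z c).dropUntil d hd).support.tail := by
        have hcend : c ∈ ((theP hT z c).dropUntil d hd).support :=
          SimpleGraph.Walk.end_mem_support _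
        rw [SimpleGraph.Walk.support_eq_cons] at hcend
        rcases List.mem_cons.mp hcend with h' | h'
        · exact absurd h' hcd.ne
        · exact h'
      exact hdisj hc hc2
    exact ⟨(((theP hT z c).takeUntil d hd).toDeleteEdges {s(c, d)} (by
        intro e' he' h'
        rw [Set.mem_singleton_iff] at h'
        exact he1 (h' ▸ he'))).reverse⟩
  · left
    exact ((reach_del_iff hT z c).mpr hm).symm

lemma cut_reach_iff (hT : T.IsTree) {c d : W} (hcd : T.Adj c d) (v w : W) :
    (T.deleteEdges {s(c, d)}).Reachable v w ↔ ((v ∈ cutA T c d) ↔ (w ∈ cutA T c d)) := by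
  constructor
  · intro h
    simp only [mem_cutA]
    exact ⟨fun hv => hv.trans h, fun hw => hw.trans h.symm⟩
  · intro h
    by_cases hv : v ∈ cutA T c d
    · exact (mem_cutA.mp hv).symm.trans (mem_cutA.mp (h.mp hv))
    · have hw : w ∉ cutA T c d := fun hw => hv (h.mpr hw)
      have hdv := (reach_c_or_d hT hcd v).resolve_left (fun hc => hv (mem_cutA.mpr hc))
      have hdw := (reach_c_or_d hT hcd w).resolve_left (fun hc => hw (mem_cutA.mpr hc))
      exact hdv.symm.trans hdw

lemma cross_mem (hT : T.IsTree) {c d : W} (hcd : T.Adj c d) {p q : W} :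
    s(p, q) ∈ (cutA T c d ×ˢ (cutA T c d)ᶜ).image (fun pq => s(pq.1, pq.2))
      ↔ ¬ (T.deleteEdges {s(c, d)}).Reachable p q := by
  constructor
  · rintro hm hr
    obtain ⟨⟨a, b⟩, hab, heq⟩ := Finset.mem_image.mp hm
    rw [Finset.mem_product, Finset.mem_compl] at hab
    rw [cut_reach_iff hT hcd] at hr
    rcases Sym2.eq_iff.mp heq with ⟨rfl, rfl⟩ | ⟨rfl, rfl⟩
    · exact hab.2 (hr.mp hab.1)
    · exact hab.2 (hr.mpr hab.1)
  · intro hr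
    rw [cut_reach_iff hT hcd] at hr
    by_cases hp : p ∈ cutA T c d
    · have hq : q ∉ cutA T c d := fun hq => hr ⟨fun _ => hq, fun _ => hp⟩
      exact Finset.mem_image.mpr ⟨(p, q),
        Finset.mem_product.mpr ⟨hp, Finset.mem_compl.mpr hq⟩, rfl⟩
    · have hq : q ∈ cutA T c d := by
        by_contra hq
        exact hr ⟨fun h => absurd h hp, fun h => absurd h hq⟩
      exact Finset.mem_image.mpr ⟨(q, p),
        Finset.mem_product.mpr ⟨hq, Finset.mem_compl.mpr hp⟩, Sym2.eq_swap⟩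

lemma cross_card (A B : Finset W) (hdisj : ∀ z, z ∈ A → z ∈ B → False) :
    ((A ×ˢ B).image (fun pq => s(pq.1, pq.2))).card = A.card * B.card := by
  rw [Finset.card_image_of_injOn, Finset.card_product]
  rintro ⟨a, b⟩ hab ⟨a', b'⟩ hab' h
  simp only [Finset.coe_product, Set.mem_prod, Finset.mem_coe] at hab hab'
  rcases Sym2.eq_iff.mp h with ⟨h1, h2⟩ | ⟨h1, h2⟩
  · simp only [Prod.mk.injEq]; exact ⟨h1, h2⟩
  · exfalso
    simp only at h1 h2
    exact hdisj b' (h1 ▸ hab.1) hab'.2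

end Cut

section LowerBound

variable {W : Type*} [Fintype W] [DecidableEq W] {T : SimpleGraph W}

lemma S_card (hT : T.IsTree) {c d x y : W} (hcd : T.Adj c d) (hf : s(x, y) ∉ T.edgeSet)
    (hOn : ¬ (T.deleteEdges {s(c, d)}).Reachable x y) :
    ((((⊤ : SimpleGraph W).edgeSet \ T.edgeSet).toFinset.filter
        (fun f' => f' ≠ s(x, y) ∧ OnFundCycle T s(c, d) f')).card) + 2
      = (cutA T c d).card * ((cutA T c d)ᶜ).card := by
  classical
  set A := cutA T c d with hA
  set crossE := (A ×ˢ Aᶜ).image (fun pq => s(pq.1, pq.2)) with hcrossE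
  have hec : s(c, d) ∈ crossE := (cross_mem hT hcd).mpr
    (isBridge_iff.mp (isAcyclic_iff_forall_adj_isBridge.mp hT.2 hcd))
  have hfc : s(x, y) ∈ crossE := (cross_mem hT hcd).mpr hOn
  have hef : s(c, d) ≠ s(x, y) := by
    intro h
    exact hf (h ▸ (SimpleGraph.mem_edgeSet _).mpr hcd)
  have hset : (((⊤ : SimpleGraph W).edgeSet \ T.edgeSet).toFinset.filter
        (fun f' => f' ≠ s(x, y) ∧ OnFundCycle T s(c, d) f'))
      = crossE \ {s(c, d), s(x, y)} := by
    ext f'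
    induction f' using Sym2.ind with
    | _ p q =>
      simp only [Finset.mem_filter, Finset.mem_sdiff, Set.mem_toFinset, Set.mem_diff,
        Finset.mem_insert, Finset.mem_singleton, SimpleGraph.mem_edgeSet, SimpleGraph.top_adj,
        onFund_mk]
      constructor
      · rintro ⟨⟨hpq, hnt⟩, hne, hnr⟩
        refine ⟨(cross_mem hT hcd).mpr hnr, ?_⟩
        push_neg
        refine ⟨fun h => ?_, hne⟩
        rcases Sym2.eq_iff.mp h with ⟨rfl, rfl⟩ | ⟨rfl, rfl⟩
        · exact hnt hcd
        · exact hnt hcd.symm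
      · rintro ⟨hcross, hno⟩
        push_neg at hno
        have hnr := (cross_mem hT hcd).mp hcross
        have hpq : p ≠ q := by rintro rfl; exact hnr (Reachable.refl p)
        have hnt : ¬ T.Adj p q := by
          intro hmem
          refine hnr (Adj.reachable ?_)
          rw [SimpleGraph.deleteEdges_adj]
          exact ⟨hmem, by simpa using hno.1⟩
        exact ⟨⟨hpq, hnt⟩, hno.2, hnr⟩
  have hpairsub : ({s(c, d), s(x, y)} : Finset (Sym2 W)) ⊆ crossE := by
    intro g hg
    rcases Finset.mem_insert.mp hg with rfl | hg
    · exact hec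
    · exact (Finset.mem_singleton.mp hg) ▸ hfc
  have hcard2 : ({s(c, d), s(x, y)} : Finset (Sym2 W)).card = 2 := by
    rw [Finset.card_insert_of_notMem (by simpa using hef), Finset.card_singleton]
  have h2le : 2 ≤ crossE.card := hcard2 ▸ Finset.card_le_card hpairsub
  rw [hset, Finset.card_sdiff_of_subset hpairsub, hcard2, Nat.sub_add_cancel h2le, hcrossE,
    cross_card A Aᶜ (fun z hz hz2 => (Finset.mem_compl.mp hz2) hz)]

lemma S_inter_card (hT : T.IsTree) {x x₁ y y₁ : W} (hx₁ : T.Adj x x₁) (hy₁ : T.Adj y y₁)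
    (hdisj : ∀ z, z ∈ cutA T x x₁ → z ∈ cutA T y y₁ → False) :
    (((((⊤ : SimpleGraph W).edgeSet \ T.edgeSet).toFinset.filter
        (fun f' => f' ≠ s(x, y) ∧ OnFundCycle T s(x, x₁) f')) ∩
      (((⊤ : SimpleGraph W).edgeSet \ T.edgeSet).toFinset.filter
        (fun f' => f' ≠ s(x, y) ∧ OnFundCycle T s(y, y₁) f'))).card) + 1
      ≤ (cutA T x x₁).card * (cutA T y y₁).card := by
  classical
  set A := cutA T x x₁ with hA
  set B := cutA T y y₁ with hB
  set D := (A ×ˢ B).image (fun pq => s(pq.1, pq.2)) with hD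
  have hfD : s(x, y) ∈ D :=
    Finset.mem_image.mpr ⟨(x, y), Finset.mem_product.mpr ⟨c_mem_cutA, c_mem_cutA⟩, rfl⟩
  have hsub : ((((⊤ : SimpleGraph W).edgeSet \ T.edgeSet).toFinset.filter
        (fun f' => f' ≠ s(x, y) ∧ OnFundCycle T s(x, x₁) f')) ∩
      (((⊤ : SimpleGraph W).edgeSet \ T.edgeSet).toFinset.filter
        (fun f' => f' ≠ s(x, y) ∧ OnFundCycle T s(y, y₁) f')))
      ⊆ D.erase s(x, y) := by
    intro f'
    induction f' using Sym2.ind with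
    | _ p q =>
      intro hf'
      rw [Finset.mem_inter, Finset.mem_filter, Finset.mem_filter] at hf'
      obtain ⟨⟨hNT, hne, hon1⟩, ⟨-, -, hon2⟩⟩ := hf'
      rw [onFund_mk] at hon1 hon2
      rw [cut_reach_iff hT hx₁] at hon1
      rw [cut_reach_iff hT hy₁] at hon2
      refine Finset.mem_erase.mpr ⟨hne, ?_⟩
      by_cases hp : p ∈ A
      · have hqA : q ∉ A := fun hq => hon1 ⟨fun _ => hq, fun _ => hp⟩
        have hpB : p ∉ B := fun hBm => hdisj p hp hBm
        have hqB : q ∈ B := by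
          by_contra hq
          exact hon2 ⟨fun h => absurd h hpB, fun h => absurd h hq⟩
        exact Finset.mem_image.mpr ⟨(p, q), Finset.mem_product.mpr ⟨hp, hqB⟩, rfl⟩
      · have hqA : q ∈ A := by
          by_contra hq
          exact hon1 ⟨fun h => absurd h hp, fun h => absurd h hq⟩
        have hqB : q ∉ B := fun hBm => hdisj q hqA hBm
        have hpB : p ∈ B := by
          by_contra hpB
          exact hon2 ⟨fun h => absurd h hpB, fun h => absurd h hqB⟩
        exact Finset.mem_image.mpr ⟨(q, p), Finset.mem_product.mpr ⟨hqA, hpB⟩, Sym2.eq_swap⟩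
  have hDcard : D.card = A.card * B.card := cross_card A B hdisj
  have h1 := Finset.card_le_card hsub
  rw [Finset.card_erase_of_mem hfD, hDcard] at h1
  have hpos : 1 ≤ A.card * B.card := hDcard ▸ Finset.card_pos.mpr ⟨_, hfD⟩
  omega

lemma fiber_bound (hT : T.IsTree) {x y : W} (hxy : x ≠ y) (hf : s(x, y) ∉ T.edgeSet) :
    2 * (Fintype.card W - 3)
      ≤ (((((⊤ : SimpleGraph W).edgeSet \ T.edgeSet).toFinset.offDiag.filter
          (fun p => CyclesMeet T p.1 p.2)).filter (fun p => p.1 = s(x, y))).card) := by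
  classical
  obtain ⟨x₁, y₁, hx₁, hy₁, he1P, he2P, he2P'⟩ := path_split hT hxy hf
  have he1T : s(x, x₁) ∈ T.edgeSet := (SimpleGraph.mem_edgeSet _).mpr hx₁
  have he2T : s(y, y₁) ∈ T.edgeSet := (SimpleGraph.mem_edgeSet _).mpr hy₁.symm
  have hOn1 : ¬ (T.deleteEdges {s(x, x₁)}).Reachable x y :=
    fun hr => ((reach_del_iff hT x y).mp hr) he1P
  have hOn2 : ¬ (T.deleteEdges {s(y, y₁)}).Reachable x y :=
    fun hr => ((reach_del_iff hT x y).mp hr) (by rw [Sym2.eq_swap]; exact he2P)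
  have hdisj : ∀ z, z ∈ cutA T x x₁ → z ∈ cutA T y y₁ → False := by
    intro z hzA hzB
    rw [mem_cutA] at hzA hzB
    have h1 : ¬ (T.deleteEdges {s(x, x₁)}).Reachable z y :=
      fun h => hOn1 (hzA.trans h)
    have h1' : s(x, x₁) ∈ (theP hT z y).edges := by
      by_contra hmem
      exact h1 ((reach_del_iff hT z y).mpr hmem)
    have hxs : x ∈ (theP hT z y).support :=
      SimpleGraph.Walk.fst_mem_support_of_mem_edges _ h1'
    have hdrop : (theP hT z y).dropUntil x hxs = theP hT x y :=
      theP_unique hT ((theP_isPath hT z y).dropUntil hxs)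
    have he2zy : s(y₁, y) ∈ (theP hT z y).edges := by
      refine SimpleGraph.Walk.edges_dropUntil_subset _ hxs ?_
      rw [hdrop]; exact he2P
    have hnot : s(y, y₁) ∉ (theP hT y z).edges := (reach_del_iff hT y z).mp hzB
    rw [theP_edges_symm hT] at hnot
    exact hnot (by rw [Sym2.eq_swap]; exact he2zy)
  have hx₁A : x₁ ∉ cutA T x x₁ := d_not_mem_cutA hT hx₁
  have hx₁B : x₁ ∉ cutA T y y₁ := by
    rw [mem_cutA]
    intro hr
    have hnot : s(y, y₁) ∉ (theP hT y x₁).edges := (reach_del_iff hT y x₁).mp hr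
    rw [theP_edges_symm hT] at hnot
    exact hnot (by rw [Sym2.eq_swap]; exact he2P')
  -- cardinalities
  set A := cutA T x x₁ with hA
  set B := cutA T y y₁ with hB
  have haA : 1 ≤ A.card := Finset.card_pos.mpr ⟨x, c_mem_cutA⟩
  have hbB : 1 ≤ B.card := Finset.card_pos.mpr ⟨y, c_mem_cutA⟩
  have hab : A.card + B.card + 1 ≤ Fintype.card W := by
    have hsubU : (A ∪ B) ⊆ Finset.univ.erase x₁ := by
      intro z hz
      refine Finset.mem_erase.mpr ⟨?_, Finset.mem_univ _⟩
      rintro rfl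
      rcases Finset.mem_union.mp hz with h | h
      · exact hx₁A h
      · exact hx₁B h
    have hd2 : Disjoint A B := Finset.disjoint_left.mpr (fun {z} hz hz2 => (hdisj z hz hz2).elim)
    have hcle := Finset.card_le_card hsubU
    rw [Finset.card_union_of_disjoint hd2, Finset.card_erase_of_mem (Finset.mem_univ _),
      Finset.card_univ] at hcle
    have hpos : 0 < Fintype.card W := Fintype.card_pos_iff.mpr ⟨x⟩
    omega
  have hS1 := S_card hT hx₁ hf hOn1
  have hS2 := S_card hT hy₁.symm hf hOn2
  have hI := S_inter_card hT hx₁ hy₁.symm hdisj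
  set S₁ := (((⊤ : SimpleGraph W).edgeSet \ T.edgeSet).toFinset.filter
        (fun f' => f' ≠ s(x, y) ∧ OnFundCycle T s(x, x₁) f')) with hS₁def
  set S₂ := (((⊤ : SimpleGraph W).edgeSet \ T.edgeSet).toFinset.filter
        (fun f' => f' ≠ s(x, y) ∧ OnFundCycle T s(y, y₁) f')) with hS₂def
  have hU := Finset.card_union_add_card_inter S₁ S₂
  -- the union injects into the fiber
  have hfib : (S₁ ∪ S₂).card
      ≤ (((((⊤ : SimpleGraph W).edgeSet \ T.edgeSet).toFinset.offDiag.filter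
          (fun p => CyclesMeet T p.1 p.2)).filter (fun p => p.1 = s(x, y))).card) := by
    apply Finset.card_le_card_of_injOn (fun f' => (s(x, y), f'))
    · intro f' hf'
      have hfNT : s(x, y) ∈ ((⊤ : SimpleGraph W).edgeSet \ T.edgeSet).toFinset :=
        Set.mem_toFinset.mpr ⟨(SimpleGraph.mem_edgeSet _).mpr ((SimpleGraph.top_adj x y).mpr hxy), hf⟩
      rcases Finset.mem_union.mp hf' with h | h
      · rw [hS₁def, Finset.mem_filter] at h
        obtain ⟨hNT, hne, hon⟩ := h
        refine Finset.mem_filter.mpr ⟨Finset.mem_filter.mpr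
          ⟨Finset.mem_offDiag.mpr ⟨hfNT, hNT, fun hh => hne hh.symm⟩, ?_⟩, rfl⟩
        exact ⟨s(x, x₁), he1T, onFund_mk.mpr hOn1, hon⟩
      · rw [hS₂def, Finset.mem_filter] at h
        obtain ⟨hNT, hne, hon⟩ := h
        refine Finset.mem_filter.mpr ⟨Finset.mem_filter.mpr
          ⟨Finset.mem_offDiag.mpr ⟨hfNT, hNT, fun hh => hne hh.symm⟩, ?_⟩, rfl⟩
        exact ⟨s(y, y₁), he2T, onFund_mk.mpr hOn2, hon⟩
    · intro a _ b _ hab2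
      exact congrArg Prod.snd hab2
  refine le_trans ?_ hfib
  -- now pure arithmetic
  have hAc : A.card + Aᶜ.card = Fintype.card W := Finset.card_add_card_compl A
  have hBc : B.card + Bᶜ.card = Fintype.card W := Finset.card_add_card_compl B
  have hN3 : 3 ≤ Fintype.card W := by omega
  set N := Fintype.card W
  set a := A.card
  set a' := Aᶜ.card
  set b := B.card
  set b' := Bᶜ.card
  zify [hN3] at *
  nlinarith [mul_nonneg (by linarith : (0:ℤ) ≤ (a : ℤ) - 1) (by linarith : (0:ℤ) ≤ (N : ℤ) - 1 - a - b),
    mul_nonneg (by linarith : (0:ℤ) ≤ (b : ℤ) - 1) (by linarith : (0:ℤ) ≤ (N : ℤ) - 1 - a - b),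
    mul_nonneg (by linarith : (0:ℤ) ≤ (a : ℤ) - 1) (by linarith : (0:ℤ) ≤ (b : ℤ) - 1)]

end LowerBound

section TotalLower

variable {W : Type*} [Fintype W] [DecidableEq W]

lemma tree_lower (T : SimpleGraph W) (hT : IsSpanningTree (⊤ : SimpleGraph W) T) :
    (Fintype.card W - 1) * (Fintype.card W - 2) * (Fintype.card W - 3)
      ≤ ((((⊤ : SimpleGraph W).edgeSet \ T.edgeSet).toFinset.offDiag).filter
          (fun p => CyclesMeet T p.1 p.2)).card := by
  classical
  have hTree : T.IsTree := ⟨hT.2.1, hT.2.2⟩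
  set N := Fintype.card W with hNdef
  set NT := ((⊤ : SimpleGraph W).edgeSet \ T.edgeSet).toFinset with hNT
  set Pairs := NT.offDiag.filter (fun p => CyclesMeet T p.1 p.2) with hPairs
  have hmaps : ∀ p ∈ Pairs, p.1 ∈ NT := by
    intro p hp
    exact (Finset.mem_offDiag.mp (Finset.mem_filter.mp hp).1).1
  rw [Finset.card_eq_sum_card_fiberwise hmaps]
  have hge : ∀ f ∈ NT, 2 * (N - 3) ≤ (Pairs.filter (fun p => p.1 = f)).card := by
    intro f
    induction f using Sym2.ind with
    | _ x y =>
      intro hfNT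
      rw [hNT, Set.mem_toFinset] at hfNT
      obtain ⟨hte, hnt⟩ := hfNT
      exact fiber_bound hTree ((SimpleGraph.top_adj x y).mp ((SimpleGraph.mem_edgeSet _).mp hte)) hnt
  have hsum : NT.card * (2 * (N - 3)) ≤ ∑ f ∈ NT, (Pairs.filter (fun p => p.1 = f)).card := by
    calc NT.card * (2 * (N - 3)) = ∑ _f ∈ NT, 2 * (N - 3) := by
          rw [Finset.sum_const, smul_eq_mul]
      _ ≤ _ := Finset.sum_le_sum hge
  refine le_trans ?_ hsum
  -- arithmetic: NT.card * 2 = (N-1)*(N-2)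
  have hTcard : T.edgeFinset.card + 1 = N := hTree.card_edgeFinset
  have hTopCard : (⊤ : SimpleGraph W).edgeFinset.card = N.choose 2 :=
    card_edgeFinset_top_eq_card_choose_two
  have hsubE : T.edgeFinset ⊆ (⊤ : SimpleGraph W).edgeFinset := by
    intro e he
    rw [mem_edgeFinset] at he ⊢
    exact (SimpleGraph.edgeSet_mono le_top) he
  have heq : NT = (⊤ : SimpleGraph W).edgeFinset \ T.edgeFinset := by
    ext e
    simp only [hNT, Set.mem_toFinset, Set.mem_diff, Finset.mem_sdiff, mem_edgeFinset]
  have hNTcard : NT.card = N.choose 2 - (N - 1) := by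
    rw [heq, Finset.card_sdiff_of_subset hsubE, hTopCard]
    omega
  have hle : N - 1 ≤ N.choose 2 := by
    calc N - 1 = T.edgeFinset.card := by omega
      _ ≤ (⊤ : SimpleGraph W).edgeFinset.card := Finset.card_le_card hsubE
      _ = N.choose 2 := hTopCard
  have hchoose2 : N.choose 2 * 2 = N * (N - 1) := by
    rw [Nat.choose_two_right]
    refine Nat.div_mul_cancel ?_
    rcases N with _ | m
    · simp
    · have : (m + 1) * m = m * (m + 1) := by ring
      simpa [this] using (Nat.even_mul_succ_self m).two_dvd
  have hident : (N - 1) * (N - 2) + 2 * (N - 1) = N * (N - 1) := by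
    rcases N with _ | _ | m
    · simp
    · simp
    · have h1 : m + 2 - 1 = m + 1 := by omega
      have h2 : m + 2 - 2 = m := by omega
      rw [h1, h2]
      ring
  have h2NT : 2 * NT.card = (N - 1) * (N - 2) := by
    have : NT.card * 2 = N.choose 2 * 2 - (N - 1) * 2 := by
      rw [hNTcard]; omega
    rw [hchoose2] at this
    omega
  calc (N - 1) * (N - 2) * (N - 3) = (2 * NT.card) * (N - 3) := by rw [h2NT]
    _ = NT.card * (2 * (N - 3)) := by ring
    _ ≤ NT.card * (2 * (N - 3)) := le_rfl

end TotalLower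

section MainArith

lemma arith_mono {a b : ℕ} (h : a ≤ b) :
    (a - 1) * ((a - 2) * (a - 2) - (a - 2)) ≤ (b - 1) * (b - 2) * (b - 3) := by
  have h1 : ∀ m : ℕ, m * m - m = m * (m - 1) := by
    intro m
    rcases m with _ | e
    · simp
    · rw [Nat.succ_sub_one,
        show (e + 1) * (e + 1) = (e + 1) * e + (e + 1) from by ring, Nat.add_sub_cancel]
  have h2 : (a - 2) * (a - 2) - (a - 2) = (a - 2) * (a - 3) := by
    have h3 : a - 2 - 1 = a - 3 := by omega
    rw [h1 (a - 2), h3]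
  rw [h2, ← mul_assoc]
  exact Nat.mul_le_mul (Nat.mul_le_mul (by omega) (by omega)) (by omega)

end MainArith

lemma card_filter_offDiag_congr {α : Type*} (s : Set (Sym2 α)) (P : Sym2 α × Sym2 α → Prop)
    (F1 F2 : Fintype s) (E1 E2 : DecidableEq (Sym2 α)) (D1 D2 : DecidablePred P) :
    (@Finset.filter _ P D1 (Finset.offDiag (@Set.toFinset _ s F1))).card
      = (@Finset.filter _ P D2 (Finset.offDiag (@Set.toFinset _ s F2))).card := by
  have hF : F1 = F2 := Subsingleton.elim _ _
  subst hF
  have hE : E1 = E2 := Subsingleton.elim _ _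
  subst hE
  have hD : D1 = D2 := Subsingleton.elim _ _
  subst hD
  rfl

/-- A connected graph with a universal vertex on at most `N` vertices has
intersection number at most that of the complete graph `K_N`. -/
theorem interNum_le_complete {V : Type*} [Fintype V] [DecidableEq V]
    (G : SimpleGraph V) (hG : G.Connected) (u : V)
    (hu : ∀ w, w ≠ u → G.Adj u w) (N : ℕ) (hn : Fintype.card V ≤ N) :
    interNum G ≤ interNum (⊤ : SimpleGraph (Fin N)) := by
  classical
  have hne : Nonempty V := hG.nonempty
  have hn1 : 1 ≤ Fintype.card V := Fintype.card_pos
  have hN1 : 1 ≤ N := le_trans hn1 hn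
  have hNfin : Nonempty (Fin N) := ⟨⟨0, hN1⟩⟩
  -- the set of values for K_N is nonempty
  have hKne : {k | ∃ T : SimpleGraph (Fin N),
      IsSpanningTree (⊤ : SimpleGraph (Fin N)) T ∧ interT (⊤ : SimpleGraph (Fin N)) T = k}.Nonempty := by
    refine ⟨_, starG (⟨0, hN1⟩ : Fin N), ⟨le_top, starG_connected _, starG_acyclic _⟩, rfl⟩
  obtain ⟨T₀, hT₀, hval⟩ := Nat.sInf_mem hKne
  have h1 : interNum G ≤ interT G (starG u) :=
    Nat.sInf_le ⟨starG u, starG_spanning hne hu, rfl⟩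
  refine le_trans h1 ?_
  have hval' : interNum (⊤ : SimpleGraph (Fin N)) = interT (⊤ : SimpleGraph (Fin N)) T₀ :=
    hval.symm
  rw [hval']
  unfold interT
  apply Nat.div_le_div_right
  have hL := star_upper G u
  have hR := tree_lower T₀ hT₀
  rw [Fintype.card_fin] at hR
  have hmid := le_trans (le_trans hL (arith_mono hn)) hR
  exact le_trans (le_of_eq (card_filter_offDiag_congr _ _ _ _ (E1 := inferInstance) (E2 := inferInstance) _ _))
    (le_trans hmid (le_of_eq (card_filter_offDiag_congr _ _ _ _ (E1 := inferInstance) (E2 := inferInstance) _ _)))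
end
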